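/- Let X = {x₀,x₁,x₂,x₃} with distribution P((x₀,+1)) = 3/24, P((x₁,−1)) = P((x₂,−1)) = P((x₃,+1)) = 7/24, groups g_i = {x₀, x_i} for i = 1,2,3, and hypotheses h ≡ +1 and h′ ≡ −1. For every assignment σ : {g₁,g₂,g₃} → {h,h′} and the resulting group-conditional majority-vote predictor f(x) = sign(Σ_{g∋x} σ(g)(x)), there exists a group g ∈ {g₁,g₂,g₃} such that L(f | g) > min_{h''∈{h,h′}} L(h'' | g) + 1/4, where L is conditional zero-one loss. -/

import Mathlib

/-- Marginal probabilities of the four points. -/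
noncomputable def pMass : Fin 4 → ℝ := ![3 / 24, 7 / 24, 7 / 24, 7 / 24]

/-- True labels: η(x₀)=+1, η(x₁)=−1, η(x₂)=−1, η(x₃)=+1. -/
def ηLab : Fin 4 → ℤ := ![1, -1, -1, 1]

/-- Group `gᵢ = {x₀, xᵢ}`. -/
def grp (i : Fin 4) : Finset (Fin 4) := {0, i}

/-- Conditional zero-one risk of `f` on group `g`. -/
noncomputable def condRisk (f : Fin 4 → ℤ) (g : Finset (Fin 4)) : ℝ :=
  (∑ x ∈ g, pMass x * (if f x = ηLab x then 0 else 1)) / ∑ x ∈ g, pMass x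

lemma cr (f : Fin 4 → ℤ) (i : Fin 4) (h : (0:Fin 4) ≠ i) :
    condRisk f (grp i) =
      (pMass 0 * (if f 0 = ηLab 0 then 0 else 1) + pMass i * (if f i = ηLab i then 0 else 1)) /
        (pMass 0 + pMass i) := by
  unfold condRisk grp
  rw [Finset.sum_pair h, Finset.sum_pair h]

lemma vote (σ : Fin 4 → Fin 4 → ℤ) (x : Fin 4) :
    (∑ j ∈ ({1, 2, 3} : Finset (Fin 4)), if x ∈ grp j then σ j x else 0)
      = (if x ∈ grp 1 then σ 1 x else 0) + (if x ∈ grp 2 then σ 2 x else 0)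
        + (if x ∈ grp 3 then σ 3 x else 0) := by
  rw [show ({1,2,3} : Finset (Fin 4)) = insert 1 (insert 2 {3}) from rfl,
    Finset.sum_insert (by decide), Finset.sum_insert (by decide), Finset.sum_singleton]
  ring

/-- For every assignment of hypotheses to groups, the group-conditional majority-vote
predictor fails the multi-group guarantee on some group. -/
theorem stmt_12 (σ : Fin 4 → Fin 4 → ℤ)
    (hσ : ∀ i, σ i = (fun _ => (1 : ℤ)) ∨ σ i = (fun _ => (-1 : ℤ))) :
    ∃ i ∈ ({1, 2, 3} : Finset (Fin 4)),
      condRisk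
          (fun x => Int.sign (∑ j ∈ ({1, 2, 3} : Finset (Fin 4)),
            if x ∈ grp j then σ j x else 0))
          (grp i)
        > min (condRisk (fun _ => (1 : ℤ)) (grp i))
            (condRisk (fun _ => (-1 : ℤ)) (grp i)) + 1 / 4 := by
  rcases hσ 1 with h1 | h1 <;> rcases hσ 2 with h2 | h2 <;> rcases hσ 3 with h3 | h3 <;>
  simp only [vote, h1, h2, h3] <;>
  first
  | (refine ⟨1, by decide, ?_⟩
     rw [cr _ _ (by decide), cr _ _ (by decide), cr _ _ (by decide)]
     norm_num [pMass, ηLab, grp, Matrix.cons_val_three, Matrix.cons_val_two, Matrix.cons_val_one, Matrix.vecHead, Matrix.vecTail, Finset.mem_insert, Finset.mem_singleton, Fin.ext_iff,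
       show ((3:ℤ)).sign = 1 from rfl, show ((1:ℤ)).sign = 1 from rfl,
       show ((-1:ℤ)).sign = -1 from rfl, show ((-3:ℤ)).sign = -1 from rfl]
     first
     | done
     | (first | rw [if_pos (by decide)] | rw [if_neg (by decide)]
        norm_num
        done))
  | (refine ⟨2, by decide, ?_⟩
     rw [cr _ _ (by decide), cr _ _ (by decide), cr _ _ (by decide)]
     norm_num [pMass, ηLab, grp, Matrix.cons_val_three, Matrix.cons_val_two, Matrix.cons_val_one, Matrix.vecHead, Matrix.vecTail, Finset.mem_insert, Finset.mem_singleton, Fin.ext_iff,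
       show ((3:ℤ)).sign = 1 from rfl, show ((1:ℤ)).sign = 1 from rfl,
       show ((-1:ℤ)).sign = -1 from rfl, show ((-3:ℤ)).sign = -1 from rfl]
     first
     | done
     | (first | rw [if_pos (by decide)] | rw [if_neg (by decide)]
        norm_num
        done))
  | (refine ⟨3, by decide, ?_⟩
     rw [cr _ _ (by decide), cr _ _ (by decide), cr _ _ (by decide)]
     norm_num [pMass, ηLab, grp, Matrix.cons_val_three, Matrix.cons_val_two, Matrix.cons_val_one, Matrix.vecHead, Matrix.vecTail, Finset.mem_insert, Finset.mem_singleton, Fin.ext_iff,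
       show ((3:ℤ)).sign = 1 from rfl, show ((1:ℤ)).sign = 1 from rfl,
       show ((-1:ℤ)).sign = -1 from rfl, show ((-3:ℤ)).sign = -1 from rfl]
     first
     | done
     | (first | rw [if_pos (by decide)] | rw [if_neg (by decide)]
        norm_num
        done))
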